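/- Let A be a von Neumann algebra on H and let t denote t·1 ∈ PPU⁺(A). (i) t is central in A[t,t⁻¹], and for every φ ∈ PPU(A) there exists n ≥ 0 such that tⁿφ* ∈ PPU⁺(A), i.e. φ ≤ tⁿ; so t is a strong order unit for the order φ ≤ φ' iff φ⁻¹φ' ∈ PPU⁺(A). (ii) For closed A'-invariant subspaces M, N of H, the product p_M p_N satisfies p_M p_N ≤ t (equivalently, the coefficient of t² in p_M p_N, which equals π_M π_N, vanishes) if and only if N ⊆ Mᗮ; in that case p_N p_M = p_{M+N} is the least upper bound of p_M and p_N in PPU(A) (singularity of t). -/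

import Mathlib

noncomputable section

/-- Finite Laurent polynomials `A[t,t⁻¹]` with coefficients among the bounded operators
on `H`, with convolution product. -/
abbrev LaurentOp (H : Type*) [NormedAddCommGroup H] [InnerProductSpace ℂ H]
    [CompleteSpace H] : Type _ :=
  AddMonoidAlgebra (H →L[ℂ] H) ℤ

variable {H : Type*} [NormedAddCommGroup H] [InnerProductSpace ℂ H] [CompleteSpace H]

/-- The involution `φ* = Σ tⁱ (φ₋ᵢ)*` on `B(H)[t,t⁻¹]` (with `*` the adjoint). -/
def lstar (φ : LaurentOp H) : LaurentOp H :=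
  AddMonoidAlgebra.ofCoeff (Finsupp.equivMapDomain (Equiv.neg ℤ) (Finsupp.mapRange star (star_zero _) φ.coeff))

/-- The specialization `ε₁(φ) = Σᵢ φᵢ`. -/
def eps1 (φ : LaurentOp H) : H →L[ℂ] H := φ.coeff.sum fun _ a => a

/-- Membership in `PPU(A)`: all coefficients of `φ` lie in the von Neumann algebra `A`,
`φ` is paraunitary (`φ*φ = φφ* = 1`), and `ε₁(φ) = 1`. -/
def InPPU (A : VonNeumannAlgebra H) (φ : LaurentOp H) : Prop :=
  (∀ i, φ.coeff i ∈ A) ∧ lstar φ * φ = 1 ∧ φ * lstar φ = 1 ∧ eps1 φ = 1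

/-- Membership in `PPU⁺(A) = PPU(A) ∩ A[t]`. -/
def InPPUplus (A : VonNeumannAlgebra H) (φ : LaurentOp H) : Prop :=
  InPPU A φ ∧ ∀ i < (0 : ℤ), φ.coeff i = 0

/-- The action of a Laurent polynomial on a two-sided sequence:
`(φx)ᵢ = Σ_k φ_k (x_{i−k})`. -/
def act (φ : LaurentOp H) (x : ℤ → H) : ℤ → H :=
  fun i => ∑ k ∈ φ.coeff.support, φ.coeff k (x (i - k))

/-- `tⁿH[[t⁻¹]]`: the square-summable sequences (i.e. elements of
`H[[t,t⁻¹]] = ℓ²(ℤ,H)`) vanishing in all degrees `> n`. -/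
def Hmn (H : Type*) [NormedAddCommGroup H] [InnerProductSpace ℂ H] [CompleteSpace H]
    (n : ℤ) : Set (ℤ → H) :=
  {x | Memℓp x 2 ∧ ∀ i > n, x i = 0}

/-- `φ·H[[t⁻¹]]`, the image of `H[[t⁻¹]] = t⁰H[[t⁻¹]]` under the action of `φ`. -/
def actH (φ : LaurentOp H) : Set (ℤ → H) := act φ '' Hmn H 0

/-- `S` is a closed linear subspace of `H[[t,t⁻¹]] = ℓ²(ℤ,H)` which is invariant under
the actions of the commutant `A'` (acting coefficientwise) and of `t⁻¹` (the shift). -/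
def IsInvClosed (A : VonNeumannAlgebra H) (S : Set (ℤ → H)) : Prop :=
  (∀ x ∈ S, Memℓp x 2) ∧
  IsClosed {y : lp (fun _ : ℤ => H) 2 | (y : ℤ → H) ∈ S} ∧
  (0 ∈ S) ∧ (∀ x ∈ S, ∀ y ∈ S, x + y ∈ S) ∧ (∀ (c : ℂ), ∀ x ∈ S, c • x ∈ S) ∧
  (∀ x ∈ S, (fun i => x (i + 1)) ∈ S) ∧
  (∀ ψ ∈ A.commutant, ∀ x ∈ S, (fun i => ψ (x i)) ∈ S)

/-- The orthogonal projection `π_M` onto a closed subspace `M`, as an operator on `H`. -/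
def projL (M : Submodule ℂ H) (hM : IsClosed (M : Set H)) : H →L[ℂ] H :=
  haveI : CompleteSpace M := hM.completeSpace_coe
  M.subtypeL.comp M.orthogonalProjectionOnto

/-- The element `p_M = tπ_M + π_{Mᗮ}` of `A[t,t⁻¹]`. -/
def pEl (M : Submodule ℂ H) (hM : IsClosed (M : Set H)) : LaurentOp H :=
  AddMonoidAlgebra.single (1 : ℤ) (projL M hM) +
    AddMonoidAlgebra.single (0 : ℤ) (projL Mᗮ M.isClosed_orthogonal)

/-- The element `t = t·1` of `A[t,t⁻¹]`. -/
def tEl (H : Type*) [NormedAddCommGroup H] [InnerProductSpace ℂ H] [CompleteSpace H] :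
    LaurentOp H :=
  AddMonoidAlgebra.single (1 : ℤ) 1

/-- `M` is invariant under every element of the commutant `A'`. -/
def InvariantC (A : VonNeumannAlgebra H) (M : Submodule ℂ H) : Prop :=
  ∀ φ ∈ A.commutant, ∀ x ∈ M, φ x ∈ M


lemma lstar_apply (φ : LaurentOp H) (i : ℤ) : (lstar φ).coeff i = star (φ.coeff (-i)) := rfl

lemma lstar_add (φ ψ : LaurentOp H) : lstar (φ + ψ) = lstar φ + lstar ψ := by
  refine AddMonoidAlgebra.coeff_injective (Finsupp.ext fun i => ?_)
  simp only [lstar_apply, AddMonoidAlgebra.coeff_add, Finsupp.add_apply, star_add]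

lemma lstar_single (n : ℤ) (a : H →L[ℂ] H) :
    lstar (AddMonoidAlgebra.single n a : LaurentOp H) = AddMonoidAlgebra.single (-n) (star a) := by
  refine AddMonoidAlgebra.coeff_injective (Finsupp.ext fun i => ?_)
  rw [lstar_apply, AddMonoidAlgebra.coeff_single, AddMonoidAlgebra.coeff_single]
  rcases eq_or_ne i (-n) with h | h
  · subst h
    rw [neg_neg, Finsupp.single_eq_same, Finsupp.single_eq_same]
  · rw [Finsupp.single_eq_of_ne (by omega), Finsupp.single_eq_of_ne (by omega), star_zero]

lemma lstar_zero : lstar (0 : LaurentOp H) = 0 := by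
  refine AddMonoidAlgebra.coeff_injective (Finsupp.ext fun i => ?_)
  rw [lstar_apply]
  simp only [AddMonoidAlgebra.coeff_zero, Finsupp.coe_zero, Pi.zero_apply, star_zero]

lemma lstar_mul (φ ψ : LaurentOp H) : lstar (φ * ψ) = lstar ψ * lstar φ := by
  induction φ using AddMonoidAlgebra.induction_linear with
  | zero => rw [zero_mul, lstar_zero, mul_zero]
  | add f g hf hg => rw [add_mul, lstar_add, hf, hg, lstar_add, mul_add]
  | single n a =>
    induction ψ using AddMonoidAlgebra.induction_linear with
    | zero => rw [mul_zero, lstar_zero, zero_mul]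
    | add f g hf hg => rw [mul_add, lstar_add, hf, hg, lstar_add, add_mul]
    | single m b =>
      rw [AddMonoidAlgebra.single_mul_single, lstar_single, lstar_single, lstar_single,
        AddMonoidAlgebra.single_mul_single, star_mul]
      congr 1
      omega

lemma lstar_lstar (φ : LaurentOp H) : lstar (lstar φ) = φ := by
  refine AddMonoidAlgebra.coeff_injective (Finsupp.ext fun i => ?_)
  rw [lstar_apply, lstar_apply, neg_neg, star_star]

lemma lstar_one : lstar (1 : LaurentOp H) = 1 := by
  rw [AddMonoidAlgebra.one_def, lstar_single, neg_zero, star_one]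

lemma eps1_single (n : ℤ) (a : H →L[ℂ] H) : eps1 (AddMonoidAlgebra.single n a : LaurentOp H) = a := by
  rw [eps1, AddMonoidAlgebra.coeff_single, Finsupp.sum_single_index]; rfl

lemma eps1_add (φ ψ : LaurentOp H) : eps1 (φ + ψ) = eps1 φ + eps1 ψ := by
  rw [eps1, eps1, eps1, AddMonoidAlgebra.coeff_add, Finsupp.sum_add_index] <;> simp

lemma eps1_zero : eps1 (0 : LaurentOp H) = 0 := by
  rw [eps1, AddMonoidAlgebra.coeff_zero, Finsupp.sum_zero_index]

lemma eps1_mul (φ ψ : LaurentOp H) : eps1 (φ * ψ) = eps1 φ * eps1 ψ := by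
  induction φ using AddMonoidAlgebra.induction_linear with
  | zero => rw [zero_mul, eps1_zero, zero_mul]
  | add f g hf hg => rw [add_mul, eps1_add, hf, hg, eps1_add, add_mul]
  | single n a =>
    induction ψ using AddMonoidAlgebra.induction_linear with
    | zero => rw [mul_zero, eps1_zero, mul_zero]
    | add f g hf hg => rw [mul_add, eps1_add, hf, hg, eps1_add, mul_add]
    | single m b =>
      rw [AddMonoidAlgebra.single_mul_single, eps1_single, eps1_single, eps1_single]

lemma eps1_one : eps1 (1 : LaurentOp H) = 1 := by
  rw [AddMonoidAlgebra.one_def, eps1_single]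

lemma eps1_lstar (φ : LaurentOp H) : eps1 (lstar φ) = star (eps1 φ) := by
  induction φ using AddMonoidAlgebra.induction_linear with
  | zero => rw [lstar_zero, eps1_zero]; exact (star_zero _).symm
  | add f g hf hg => rw [lstar_add, eps1_add, hf, hg, eps1_add, star_add]
  | single n a => rw [lstar_single, eps1_single, eps1_single]


variable {A : VonNeumannAlgebra H}

lemma mul_coeff_mem {φ ψ : LaurentOp H} (hφ : ∀ i, φ.coeff i ∈ A) (hψ : ∀ i, ψ.coeff i ∈ A) (n : ℤ) :
    (φ * ψ).coeff n ∈ A := by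
  classical
  rw [AddMonoidAlgebra.coeff_mul]
  refine sum_mem fun i _ => sum_mem fun j _ => ?_
  dsimp only
  split_ifs
  · exact mul_mem (hφ i) (hψ j)
  · exact zero_mem A

lemma InPPU.lstar_mem {φ : LaurentOp H} (h : InPPU A φ) : InPPU A (lstar φ) := by
  refine ⟨fun i => ?_, ?_, ?_, ?_⟩
  · rw [lstar_apply]; exact star_mem (h.1 _)
  · rw [lstar_lstar]; exact h.2.2.1
  · rw [lstar_lstar]; exact h.2.1
  · rw [eps1_lstar, h.2.2.2, star_one]

lemma InPPU.mul {φ ψ : LaurentOp H} (hφ : InPPU A φ) (hψ : InPPU A ψ) : InPPU A (φ * ψ) := by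
  refine ⟨mul_coeff_mem hφ.1 hψ.1, ?_, ?_, ?_⟩
  · rw [lstar_mul, mul_assoc, ← mul_assoc (lstar φ), hφ.2.1, one_mul, hψ.2.1]
  · rw [lstar_mul, mul_assoc, ← mul_assoc ψ, hψ.2.2.1, one_mul, hφ.2.2.1]
  · rw [eps1_mul, hφ.2.2.2, hψ.2.2.2, one_mul]

lemma single_one_ppu (n : ℤ) : InPPU A (AddMonoidAlgebra.single n (1 : H →L[ℂ] H)) := by
  refine ⟨fun i => ?_, ?_, ?_, ?_⟩
  · rcases eq_or_ne n i with h | h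
    · subst h; rw [AddMonoidAlgebra.coeff_single, Finsupp.single_eq_same]; exact one_mem A
    · rw [AddMonoidAlgebra.coeff_single, Finsupp.single_eq_of_ne' h]; exact zero_mem A
  · rw [lstar_single, star_one, AddMonoidAlgebra.single_mul_single, one_mul, neg_add_cancel,
      ← AddMonoidAlgebra.one_def]
  · rw [lstar_single, star_one, AddMonoidAlgebra.single_mul_single, one_mul, add_neg_cancel,
      ← AddMonoidAlgebra.one_def]
  · exact eps1_single _ _

lemma tEl_ppu : InPPU A (tEl H) := single_one_ppu 1

lemma tEl_pow (n : ℕ) : (tEl H) ^ n = AddMonoidAlgebra.single (n : ℤ) (1 : H →L[ℂ] H) := by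
  induction n with
  | zero => rw [pow_zero, AddMonoidAlgebra.one_def, Nat.cast_zero]
  | succ k ih => rw [pow_succ, ih, tEl, AddMonoidAlgebra.single_mul_single, one_mul]; norm_num

set_option maxHeartbeats 1000000 in
lemma tEl_comm (ψ : LaurentOp H) : tEl H * ψ = ψ * tEl H := by
  refine AddMonoidAlgebra.coeff_injective (Finsupp.ext fun i => ?_)
  rw [tEl, AddMonoidAlgebra.coeff_single_mul_apply, AddMonoidAlgebra.coeff_mul_single_apply, one_mul, mul_one]
  congr 1
  omega

lemma tEl_pow_comm (n : ℕ) (ψ : LaurentOp H) : tEl H ^ n * ψ = ψ * tEl H ^ n := by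
  induction n with
  | zero => rw [pow_zero, one_mul, mul_one]
  | succ k ih => rw [pow_succ, mul_assoc, tEl_comm, ← mul_assoc, ih, mul_assoc]

lemma strong_unit_left (φ : LaurentOp H) (h : InPPU A φ) :
    ∃ n : ℕ, InPPUplus A (tEl H ^ n * lstar φ) := by
  set n := φ.coeff.support.sup Int.toNat with hn
  refine ⟨n, ⟨?_, ?_⟩⟩
  · exact InPPU.mul (by rw [tEl_pow]; exact single_one_ppu _) h.lstar_mem
  · intro i hi
    rw [tEl_pow, AddMonoidAlgebra.coeff_single_mul_apply, one_mul, lstar_apply]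
    have h3 : φ.coeff (-(-(n : ℤ) + i)) = 0 := by
      apply Finsupp.notMem_support_iff.1
      intro hmem
      have h4 := Finset.le_sup (f := Int.toNat) hmem
      omega
    rw [h3, star_zero]

lemma strong_unit_right (φ : LaurentOp H) (h : InPPU A φ) :
    ∃ n : ℕ, InPPUplus A (lstar φ * tEl H ^ n) := by
  obtain ⟨n, hn⟩ := strong_unit_left φ h
  refine ⟨n, ?_⟩
  rwa [← tEl_pow_comm]


section Proj

variable (M : Submodule ℂ H) (hM : IsClosed (M : Set H))

lemma projL_apply_mem (x : H) : projL M hM x ∈ M := by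
  haveI : CompleteSpace M := hM.completeSpace_coe
  exact (M.orthogonalProjectionOnto x).2

lemma projL_eq_self {x : H} (hx : x ∈ M) : projL M hM x = x := by
  haveI : CompleteSpace M := hM.completeSpace_coe
  exact Submodule.eq_starProjection_of_mem_orthogonal hx (by simp)

lemma projL_eq_zero {x : H} (hx : x ∈ Mᗮ) : projL M hM x = 0 := by
  haveI : CompleteSpace M := hM.completeSpace_coe
  have := Submodule.orthogonalProjectionOnto_apply_of_mem_orthogonal hx
  simpa [projL] using congrArg Subtype.val this

lemma sub_projL_mem (x : H) : x - projL M hM x ∈ Mᗮ := by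
  haveI : CompleteSpace M := hM.completeSpace_coe
  exact Submodule.sub_starProjection_mem_orthogonal x

lemma projL_orthogonal : projL Mᗮ M.isClosed_orthogonal = 1 - projL M hM := by
  haveI : CompleteSpace M := hM.completeSpace_coe
  ext x
  have := Submodule.starProjection_orthogonal_val (K := M) x
  exact this

lemma projL_idem : projL M hM * projL M hM = projL M hM := by
  ext x
  exact projL_eq_self M hM (projL_apply_mem M hM x)

lemma projL_star : star (projL M hM) = projL M hM := by
  haveI : CompleteSpace M := hM.completeSpace_coe
  exact isSelfAdjoint_starProjection M

lemma orth_invariant {A : VonNeumannAlgebra H} (hinv : InvariantC A M)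
    {ψ : H →L[ℂ] H} (hψ : ψ ∈ A.commutant) {y : H} (hy : y ∈ Mᗮ) : ψ y ∈ Mᗮ := by
  intro m hm
  have h1 : ContinuousLinearMap.adjoint ψ m ∈ M := hinv _ (star_mem hψ) m hm
  rw [← ContinuousLinearMap.adjoint_inner_left]
  exact hy _ h1

lemma projL_mem {A : VonNeumannAlgebra H} (hinv : InvariantC A M) : projL M hM ∈ A := by
  have : projL M hM ∈ Set.centralizer (Set.centralizer (A : Set (H →L[ℂ] H))) := by
    rw [Set.mem_centralizer_iff]
    intro ψ hψ
    have hψ' : ψ ∈ A.commutant := by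
      rw [VonNeumannAlgebra.mem_commutant_iff]
      intro g hg
      exact hψ g hg
    ext x
    have hd : x = projL M hM x + (x - projL M hM x) := by abel
    calc (ψ * projL M hM) x = ψ (projL M hM x) := rfl
      _ = projL M hM (ψ (projL M hM x)) + projL M hM (ψ (x - projL M hM x)) := by
          rw [projL_eq_self M hM (hinv _ hψ' _ (projL_apply_mem M hM x)),
            projL_eq_zero M hM (orth_invariant M hinv hψ' (sub_projL_mem M hM x)), add_zero]
      _ = projL M hM (ψ (projL M hM x) + ψ (x - projL M hM x)) := by rw [map_add]
      _ = projL M hM (ψ x) := by rw [← map_add, ← hd]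
      _ = (projL M hM * ψ) x := rfl
  rw [A.centralizer_centralizer] at this
  exact this

variable (N : Submodule ℂ H) (hN : IsClosed (N : Set H))

lemma projL_comp_eq_zero_iff :
    projL M hM * projL N hN = 0 ↔ N ≤ Mᗮ := by
  constructor
  · intro h x hx
    have h1 : projL M hM (projL N hN x) = 0 := congrFun (congrArg DFunLike.coe h) x
    rw [projL_eq_self N hN hx] at h1
    have := sub_projL_mem M hM x
    rwa [h1, sub_zero] at this
  · intro h
    ext x
    exact projL_eq_zero M hM (h (projL_apply_mem N hN x))

lemma projL_comp_eq_zero' (h : N ≤ Mᗮ) : projL N hN * projL M hM = 0 := by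
  have h0 : projL M hM * projL N hN = 0 := (projL_comp_eq_zero_iff M hM N hN).2 h
  calc projL N hN * projL M hM = star (projL M hM * projL N hN) := by
        rw [star_mul, projL_star, projL_star]
    _ = 0 := by rw [h0, star_zero]

end Proj

section Sup

variable (M : Submodule ℂ H) (hM : IsClosed (M : Set H))
variable (N : Submodule ℂ H) (hN : IsClosed (N : Set H))

lemma le_orth_symm (h : N ≤ Mᗮ) : M ≤ Nᗮ := by
  intro x hx
  intro u hu
  rw [inner_eq_zero_symm]
  exact h hu x hx

lemma sup_mem_projadd (h : N ≤ Mᗮ) (x : H) :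
    projL M hM x + projL N hN x ∈ M ⊔ N :=
  Submodule.add_mem_sup (projL_apply_mem M hM x) (projL_apply_mem N hN x)

lemma sup_sub_mem (h : N ≤ Mᗮ) (x : H) :
    x - (projL M hM x + projL N hN x) ∈ (M ⊔ N)ᗮ := by
  have hMorth : x - (projL M hM x + projL N hN x) ∈ Mᗮ := by
    have h1 := sub_projL_mem M hM x
    have h2 : projL N hN x ∈ Mᗮ := h (projL_apply_mem N hN x)
    have := Submodule.sub_mem Mᗮ h1 h2
    convert this using 1
    abel
  have hNorth : x - (projL M hM x + projL N hN x) ∈ Nᗮ := by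
    have h1 := sub_projL_mem N hN x
    have h2 : projL M hM x ∈ Nᗮ := le_orth_symm M N h (projL_apply_mem M hM x)
    have := Submodule.sub_mem Nᗮ h1 h2
    convert this using 1
    abel
  intro u hu
  rcases Submodule.mem_sup.1 hu with ⟨m, hm, n, hn, rfl⟩
  rw [inner_add_left, hMorth m hm, hNorth n hn, add_zero]

include hM hN in
lemma sup_closed (h : N ≤ Mᗮ) : IsClosed ((M ⊔ N : Submodule ℂ H) : Set H) := by
  have hset : ((M ⊔ N : Submodule ℂ H) : Set H)
      = {x : H | projL M hM x + projL N hN x = x} := by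
    ext x
    constructor
    · intro hx
      rcases Submodule.mem_sup.1 hx with ⟨m, hm, n, hn, rfl⟩
      simp only [Set.mem_setOf_eq, map_add]
      rw [projL_eq_self M hM hm, projL_eq_zero M hM (h hn),
        projL_eq_zero N hN (le_orth_symm M N h hm), projL_eq_self N hN hn]
      abel
    · intro hx
      rw [← hx]
      exact sup_mem_projadd M hM N hN h x
  rw [hset]
  have : {x : H | projL M hM x + projL N hN x = x}
      = {x : H | (projL M hM + projL N hN) x = x} := rfl
  rw [this]
  exact isClosed_eq (projL M hM + projL N hN).continuous continuous_id

lemma projL_sup (h : N ≤ Mᗮ) (hMN : IsClosed ((M ⊔ N : Submodule ℂ H) : Set H)) :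
    projL (M ⊔ N) hMN = projL M hM + projL N hN := by
  haveI : CompleteSpace (M ⊔ N : Submodule ℂ H) := hMN.completeSpace_coe
  ext x
  exact Submodule.eq_starProjection_of_mem_orthogonal (sup_mem_projadd M hM N hN h x)
    (sup_sub_mem M hM N hN h x)

end Sup

section Fpoly

def Fp (a b : H →L[ℂ] H) : LaurentOp H := AddMonoidAlgebra.single 1 a + AddMonoidAlgebra.single 0 b

lemma addsingle_mul (m n : ℤ) (a b c d : H →L[ℂ] H) :
    ((AddMonoidAlgebra.single m a + AddMonoidAlgebra.single 0 b : LaurentOp H)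
        * ((AddMonoidAlgebra.single n c + AddMonoidAlgebra.single 0 d : LaurentOp H)))
      = AddMonoidAlgebra.single (m + n) (a * c)
        + (AddMonoidAlgebra.single m (a * d) + AddMonoidAlgebra.single n (b * c))
        + AddMonoidAlgebra.single 0 (b * d) := by
  rw [add_mul, mul_add, mul_add, AddMonoidAlgebra.single_mul_single,
    AddMonoidAlgebra.single_mul_single, AddMonoidAlgebra.single_mul_single,
    AddMonoidAlgebra.single_mul_single, add_zero, zero_add, add_zero]
  abel

lemma lstar_Fp (a b : H →L[ℂ] H) :
    lstar (Fp a b) = AddMonoidAlgebra.single (-1 : ℤ) (star a) + AddMonoidAlgebra.single 0 (star b) := by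
  rw [Fp, lstar_add, lstar_single, lstar_single, neg_zero]

lemma pEl_eq (M : Submodule ℂ H) (hM : IsClosed (M : Set H)) :
    pEl M hM = Fp (projL M hM) (1 - projL M hM) := by
  rw [pEl, projL_orthogonal M hM]; rfl

lemma Fp_coeff_mem {A : VonNeumannAlgebra H} {e f : H →L[ℂ] H} (he : e ∈ A) (hf : f ∈ A)
    (i : ℤ) : (Fp e f).coeff i ∈ A := by
  rw [Fp, AddMonoidAlgebra.coeff_add, Finsupp.add_apply]
  refine add_mem ?_ ?_ <;> rw [AddMonoidAlgebra.coeff_single, Finsupp.single_apply] <;> split_ifs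
  · exact he
  · exact zero_mem A
  · exact hf
  · exact zero_mem A

lemma Fp_ppu {A : VonNeumannAlgebra H} (e : H →L[ℂ] H) (he : e * e = e)
    (hse : star e = e) (heA : e ∈ A) : InPPUplus A (Fp e (1 - e)) := by
  have h1 : e * (1 - e) = 0 := by rw [mul_sub, mul_one, he, sub_self]
  have h2 : (1 - e) * e = 0 := by rw [sub_mul, one_mul, he, sub_self]
  have h3 : (1 - e) * (1 - e) = 1 - e := by rw [sub_mul, one_mul, mul_sub, mul_one, he, sub_self, sub_zero]
  have hstar : star (1 - e) = 1 - e := by rw [star_sub, star_one, hse]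
  have hlmul : lstar (Fp e (1 - e)) * Fp e (1 - e) = 1 := by
    rw [lstar_Fp, hse, hstar, Fp, addsingle_mul, he, h1, h2, h3, neg_add_cancel,
      AddMonoidAlgebra.single_zero, AddMonoidAlgebra.single_zero, zero_add, add_zero, ← AddMonoidAlgebra.single_add,
      add_sub_cancel]
    exact AddMonoidAlgebra.one_def.symm
  have hrmul : Fp e (1 - e) * lstar (Fp e (1 - e)) = 1 := by
    rw [lstar_Fp, hse, hstar, Fp, addsingle_mul, he, h1, h2, h3, add_neg_cancel,
      AddMonoidAlgebra.single_zero, AddMonoidAlgebra.single_zero, zero_add, add_zero, ← AddMonoidAlgebra.single_add,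
      add_sub_cancel]
    exact AddMonoidAlgebra.one_def.symm
  refine ⟨⟨Fp_coeff_mem heA (sub_mem (one_mem A) heA), hlmul, hrmul, ?_⟩, ?_⟩
  · rw [Fp, eps1_add, eps1_single, eps1_single, add_sub_cancel]
  · intro i hi
    rw [Fp, AddMonoidAlgebra.coeff_add, Finsupp.add_apply, AddMonoidAlgebra.coeff_single,
      Finsupp.single_eq_of_ne (by omega), AddMonoidAlgebra.coeff_single,
      Finsupp.single_eq_of_ne (by omega), add_zero]

end Fpoly

section Main

lemma lstarF_mul_F (a b c d : H →L[ℂ] H) :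
    lstar (Fp a b) * Fp c d
      = AddMonoidAlgebra.single (-1 : ℤ) (star a * d)
        + AddMonoidAlgebra.single 0 (star a * c + star b * d) + AddMonoidAlgebra.single 1 (star b * c) := by
  rw [lstar_Fp, Fp, addsingle_mul, neg_add_cancel, AddMonoidAlgebra.single_add]
  abel

lemma coeff_lstarF_mul (a b : H →L[ℂ] H) (τ : LaurentOp H) (i : ℤ) :
    (lstar (Fp a b) * τ).coeff i = star a * τ.coeff (1 + i) + star b * τ.coeff i := by
  have h1 : (-(-1 : ℤ) + i) = 1 + i := by norm_num
  have h2 : (-(0 : ℤ) + i) = i := by norm_num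
  rw [lstar_Fp, add_mul, AddMonoidAlgebra.coeff_add, Finsupp.add_apply,
    AddMonoidAlgebra.coeff_single_mul_apply, AddMonoidAlgebra.coeff_single_mul_apply, h1, h2]

lemma ppuplus_extract (e : H →L[ℂ] H) (he : e * e = e) (hse : star e = e) (τ : LaurentOp H)
    (h : ∀ i < (0 : ℤ), (lstar (Fp e (1 - e)) * τ).coeff i = 0) :
    (∀ j ≤ (0 : ℤ), e * τ.coeff j = 0) ∧ (∀ i < (0 : ℤ), τ.coeff i = 0) := by
  have he1 : e * (1 - e) = 0 := by rw [mul_sub, mul_one, he, sub_self]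
  have hstar1 : star (1 - e) = 1 - e := by rw [star_sub, star_one, hse]
  have key : ∀ i < (0 : ℤ), e * τ.coeff (1 + i) + (1 - e) * τ.coeff i = 0 := by
    intro i hi
    have := h i hi
    rwa [coeff_lstarF_mul, hse, hstar1] at this
  have hA : ∀ j ≤ (0 : ℤ), e * τ.coeff j = 0 := by
    intro j hj
    have h2 : e * (e * τ.coeff (1 + (j - 1)) + (1 - e) * τ.coeff (j - 1)) = 0 := by
      rw [key (j - 1) (by omega), mul_zero]
    rw [mul_add, ← mul_assoc, he, ← mul_assoc, he1, zero_mul, add_zero] at h2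
    have h3 : (1 : ℤ) + (j - 1) = j := by ring
    rwa [h3] at h2
  refine ⟨hA, fun i hi => ?_⟩
  have h4 := key i hi
  rw [hA (1 + i) (by omega), zero_add] at h4
  have h5 := hA i (by omega)
  have h6 : (e + (1 - e)) * τ.coeff i = 0 := by rw [add_mul, h4, h5, add_zero]
  rwa [add_sub_cancel, one_mul] at h6


/--
Let `A` be a von Neumann algebra on `H` and let `t` denote `t·1 ∈ PPU⁺(A)`.
(i) `t` is central in `A[t,t⁻¹]`, and for every `φ ∈ PPU(A)` there is `n ≥ 0` with
`tⁿφ* ∈ PPU⁺(A)`, i.e. `φ ≤ tⁿ` (so `t` is a strong order unit for the order `φ ≤ φ'`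
iff `φ⁻¹φ' ∈ PPU⁺(A)`).
(ii) For closed `A'`-invariant subspaces `M, N` of `H`, the coefficient of `t²` in
`p_M p_N` equals `π_M π_N`; it vanishes iff `N ⊆ Mᗮ`, which is also equivalent to
`p_M p_N ≤ t`; and in that case `p_N p_M = p_{M+N}` is the least upper bound of `p_M`
and `p_N` in `PPU(A)` (singularity of `t`).
-/
theorem stmt19 (A : VonNeumannAlgebra H) :
    -- (i) t is central
    (∀ ψ : LaurentOp H, tEl H * ψ = ψ * tEl H) ∧
    -- t is a strong order unit: tⁿφ* ∈ PPU⁺(A), i.e. φ ≤ tⁿ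
    (∀ φ : LaurentOp H, InPPU A φ →
      ∃ n : ℕ, InPPUplus A (tEl H ^ n * lstar φ)) ∧
    (∀ φ : LaurentOp H, InPPU A φ →
      ∃ n : ℕ, InPPUplus A (lstar φ * tEl H ^ n)) ∧
    -- (ii) singularity of t
    (∀ (M N : Submodule ℂ H) (hM : IsClosed (M : Set H)) (hN : IsClosed (N : Set H)),
      InvariantC A M → InvariantC A N →
      -- the coefficient of t² in p_M p_N is π_M π_N
      (pEl M hM * pEl N hN).coeff (2 : ℤ) = projL M hM * projL N hN ∧
      (projL M hM * projL N hN = 0 ↔ N ≤ Mᗮ) ∧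
      -- p_M p_N ≤ t iff N ⊆ Mᗮ
      (InPPUplus A (lstar (pEl M hM * pEl N hN) * tEl H) ↔ N ≤ Mᗮ) ∧
      -- in that case p_N p_M = p_{M+N} is the least upper bound of p_M and p_N
      (N ≤ Mᗮ →
        (∃ hMN : IsClosed ((M ⊔ N : Submodule ℂ H) : Set H),
          pEl N hN * pEl M hM = pEl (M ⊔ N) hMN) ∧
        InPPUplus A (lstar (pEl M hM) * (pEl N hN * pEl M hM)) ∧
        InPPUplus A (lstar (pEl N hN) * (pEl N hN * pEl M hM)) ∧
        ∀ τ : LaurentOp H, InPPU A τ →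
          InPPUplus A (lstar (pEl M hM) * τ) →
          InPPUplus A (lstar (pEl N hN) * τ) →
          InPPUplus A (lstar (pEl N hN * pEl M hM) * τ))) := by
  refine ⟨tEl_comm, fun φ h => strong_unit_left φ h, fun φ h => strong_unit_right φ h, ?_⟩
  intro M N hM hN hMinv hNinv
  set P := projL M hM with hPdef
  set Q := projL N hN with hQdef
  have hP : P * P = P := projL_idem M hM
  have hQ : Q * Q = Q := projL_idem N hN
  have hsP : star P = P := projL_star M hM
  have hsQ : star Q = Q := projL_star N hN
  have hPA : P ∈ A := projL_mem M hM hMinv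
  have hQA : Q ∈ A := projL_mem N hN hNinv
  -- coefficient of t²
  have hcoeff : (pEl M hM * pEl N hN).coeff (2 : ℤ) = P * Q := by
    rw [pEl_eq, pEl_eq, Fp, Fp, addsingle_mul]
    rw [AddMonoidAlgebra.coeff_add, AddMonoidAlgebra.coeff_add, AddMonoidAlgebra.coeff_add,
      Finsupp.add_apply, Finsupp.add_apply, Finsupp.add_apply, AddMonoidAlgebra.coeff_single,
      AddMonoidAlgebra.coeff_single, AddMonoidAlgebra.coeff_single, AddMonoidAlgebra.coeff_single,
      Finsupp.single_apply, Finsupp.single_apply, Finsupp.single_apply, Finsupp.single_apply]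
    norm_num
    rfl
  refine ⟨hcoeff, projL_comp_eq_zero_iff M hM N hN, ?_, ?_⟩
  · -- p_M p_N ≤ t ↔ N ≤ Mᗮ
    constructor
    · intro h
      have h1 := h.2 (-1) (by norm_num)
      rw [tEl, AddMonoidAlgebra.coeff_mul_single_apply, mul_one, lstar_apply] at h1
      have h2 : (-(-1 + -1) : ℤ) = 2 := by norm_num
      rw [h2, hcoeff] at h1
      have h3 : P * Q = 0 := by rwa [star_eq_zero] at h1
      exact (projL_comp_eq_zero_iff M hM N hN).1 h3
    · intro h
      have hPQ : P * Q = 0 := (projL_comp_eq_zero_iff M hM N hN).2 h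
      have hQP : Q * P = 0 := projL_comp_eq_zero' M hM N hN h
      have e1 : P * (1 - Q) + (1 - P) * Q = P + Q := by
        rw [mul_sub, sub_mul, mul_one, one_mul, hPQ]; abel
      have e2 : (1 - P) * (1 - Q) = 1 - (P + Q) := by
        rw [sub_mul, one_mul, mul_sub, mul_one, hPQ, sub_zero]; abel
      have he : pEl M hM * pEl N hN = Fp (P + Q) (1 - (P + Q)) := by
        rw [pEl_eq, pEl_eq, Fp, Fp, addsingle_mul, hPQ, AddMonoidAlgebra.single_zero, zero_add,
          ← AddMonoidAlgebra.single_add, e1, e2, Fp]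
      have hidem : (P + Q) * (P + Q) = P + Q := by
        rw [add_mul, mul_add, mul_add, hP, hQ, hPQ, hQP]; abel
      have hstar' : star (P + Q) = P + Q := by rw [star_add, hsP, hsQ]
      have heA : P + Q ∈ A := add_mem hPA hQA
      have hl : lstar (Fp (P + Q) (1 - (P + Q))) * tEl H
          = Fp (1 - (P + Q)) (1 - (1 - (P + Q))) := by
        rw [lstar_Fp, hstar', star_sub, star_one, hstar', tEl, add_mul,
          AddMonoidAlgebra.single_mul_single, AddMonoidAlgebra.single_mul_single,
          mul_one, mul_one, neg_add_cancel, zero_add, Fp, sub_sub_cancel]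
        abel
      rw [he, hl]
      exact Fp_ppu (1 - (P + Q))
        (by rw [sub_mul, one_mul, mul_sub, mul_one, hidem, sub_self, sub_zero])
        (by rw [star_sub, star_one, hstar']) (sub_mem (one_mem A) heA)
  · -- the sup part
    intro h
    have hPQ : P * Q = 0 := (projL_comp_eq_zero_iff M hM N hN).2 h
    have hQP : Q * P = 0 := projL_comp_eq_zero' M hM N hN h
    have hidem : (P + Q) * (P + Q) = P + Q := by
      rw [add_mul, mul_add, mul_add, hP, hQ, hPQ, hQP]; abel
    have hstar' : star (P + Q) = P + Q := by rw [star_add, hsP, hsQ]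
    have heA : P + Q ∈ A := add_mem hPA hQA
    have hMN : IsClosed ((M ⊔ N : Submodule ℂ H) : Set H) := sup_closed M hM N hN h
    have hNM : pEl N hN * pEl M hM = Fp (P + Q) (1 - (P + Q)) := by
      have e1 : Q * (1 - P) + (1 - Q) * P = P + Q := by
        rw [mul_sub, sub_mul, mul_one, one_mul, hQP]; abel
      have e2 : (1 - Q) * (1 - P) = 1 - (P + Q) := by
        rw [sub_mul, one_mul, mul_sub, mul_one, hQP, sub_zero]; abel
      rw [pEl_eq, pEl_eq, Fp, Fp, addsingle_mul, hQP, AddMonoidAlgebra.single_zero, zero_add,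
        ← AddMonoidAlgebra.single_add, e1, e2, Fp]
    have hsupP : pEl (M ⊔ N) hMN = Fp (P + Q) (1 - (P + Q)) := by
      rw [pEl_eq (M ⊔ N) hMN, projL_sup M hM N hN h hMN]
    refine ⟨⟨hMN, by rw [hNM, hsupP]⟩, ?_, ?_, ?_⟩
    · -- lstar p_M * (p_N p_M) = p_N
      have hA2 : lstar (pEl M hM) * (pEl N hN * pEl M hM) = Fp Q (1 - Q) := by
        rw [hNM, pEl_eq, lstarF_mul_F, hsP, star_sub, star_one, hsP]
        have c1 : P * (1 - (P + Q)) = 0 := by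
          rw [mul_sub, mul_one, mul_add, hP, hPQ, add_zero, sub_self]
        have c2 : P * (P + Q) + (1 - P) * (1 - (P + Q)) = 1 - Q := by
          rw [mul_add, hP, hPQ, add_zero, sub_mul, one_mul, mul_sub, mul_one, mul_add, hP, hPQ,
            add_zero]
          abel
        have c3 : (1 - P) * (P + Q) = Q := by
          rw [sub_mul, one_mul, mul_add, hP, hPQ, add_zero, add_sub_cancel_left]
        rw [c1, c2, c3, AddMonoidAlgebra.single_zero, zero_add, Fp]
        abel
      rw [hA2]
      exact Fp_ppu Q hQ hsQ hQA
    · have hA3 : lstar (pEl N hN) * (pEl N hN * pEl M hM) = Fp P (1 - P) := by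
        rw [hNM, pEl_eq, lstarF_mul_F, hsQ, star_sub, star_one, hsQ]
        have c1 : Q * (1 - (P + Q)) = 0 := by
          rw [mul_sub, mul_one, mul_add, hQ, hQP, zero_add, sub_self]
        have c2 : Q * (P + Q) + (1 - Q) * (1 - (P + Q)) = 1 - P := by
          rw [mul_add, hQ, hQP, zero_add, sub_mul, one_mul, mul_sub, mul_one, mul_add, hQ, hQP,
            zero_add]
          abel
        have c3 : (1 - Q) * (P + Q) = P := by
          rw [sub_mul, one_mul, mul_add, hQ, hQP, zero_add, add_sub_cancel_right]
        rw [c1, c2, c3, AddMonoidAlgebra.single_zero, zero_add, Fp]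
        abel
      rw [hA3]
      exact Fp_ppu P hP hsP hPA
    · intro τ hτ ht1 ht2
      rw [pEl_eq M hM] at ht1
      rw [pEl_eq N hN] at ht2
      obtain ⟨hPe, hPneg⟩ := ppuplus_extract P hP hsP τ ht1.2
      obtain ⟨hQe, hQneg⟩ := ppuplus_extract Q hQ hsQ τ ht2.2
      rw [hNM]
      refine ⟨InPPU.mul (Fp_ppu (P + Q) hidem hstar' heA).1.lstar_mem hτ, ?_⟩
      intro i hi
      rw [coeff_lstarF_mul, hstar', star_sub, star_one, hstar', hPneg i hi, mul_zero, add_zero,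
        add_mul, hPe (1 + i) (by omega), hQe (1 + i) (by omega), add_zero]
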